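/- The function Ψ is continuous at every irrational point x of the interval [0, 1/2]. -/

import Mathlib

/-- `T(x) = x·(1 + {1/x})` for `x ≠ 0`, `T(0) = 0`. -/
noncomputable def Tmap (x : ℝ) : ℝ := if x = 0 then 0 else x * (1 + Int.fract (1 / x))

/-- `I(x) = {1/x} / (1 + {1/x})` for `x ≠ 0`, `I(0) = 0`. -/
noncomputable def Imap (x : ℝ) : ℝ :=
  if x = 0 then 0 else Int.fract (1 / x) / (1 + Int.fract (1 / x))

/-- `Ψ(x) = 2x + 2·Σ_{j ≥ 1} T(x)·T(I(x))·⋯·T(I^{j-1}(x))·I^{j}(x)`. -/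
noncomputable def Psi (x : ℝ) : ℝ :=
  2 * x + 2 * ∑' j : ℕ, (∏ i ∈ Finset.range (j + 1), Tmap (Imap^[i] x)) * Imap^[j + 1] x

/-!
Each factor `T(Iⁱ x)` is at most `1`, and consecutive factors satisfy
`T(y)·T(I y) ≤ T(y)·(1 - I y) = y ≤ 1/2`, so the `j`-th term of the series is `O(2^{-j/2})`
uniformly on `[0, 1/2]`. Away from the points `1/n`, the maps `T` and `I` are continuous, and `I`
maps irrationals to irrationals; hence at an irrational point every term is continuous, and so is
the uniformly convergent series.
-/

open Set

theorem continuousWithinAt_tsum {α β F : Type*} [TopologicalSpace β] [NormedAddCommGroup F]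
    [CompleteSpace F] {f : α → β → F} {u : α → ℝ} {s : Set β} {x : β} (hx : x ∈ s)
    (hf : ∀ i, ContinuousWithinAt (f i) s x) (hu : Summable u)
    (hfu : ∀ n y, y ∈ s → ‖f n y‖ ≤ u n) :
    ContinuousWithinAt (fun y => ∑' n, f n y) s x := by
  refine continuousWithinAt_of_locally_uniform_approx_of_continuousWithinAt hx fun v hv => ?_
  obtain ⟨t, ht⟩ := (tendstoUniformlyOn_tsum hu hfu v hv).exists
  exact ⟨s, self_mem_nhdsWithin, _, tendsto_finsetSum t fun i _ => hf i, ht⟩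

theorem summable_pow_div_two {r : ℝ} (h0 : 0 ≤ r) (h1 : r < 1) :
    Summable fun n : ℕ => r ^ (n / 2) := by
  have hgeom := summable_geometric_of_lt_one h0 h1
  refine Summable.even_add_odd ?_ ?_ <;> refine hgeom.congr fun k => ?_ <;> congr 1 <;> omega

theorem Imap_mem_Icc (y : ℝ) : Imap y ∈ Icc (0 : ℝ) (1 / 2) := by
  unfold Imap
  split_ifs
  · norm_num
  have h0 := Int.fract_nonneg (1 / y)
  have h1 := Int.fract_lt_one (1 / y)
  exact ⟨by positivity, by rw [div_le_iff₀ (by linarith)]; linarith⟩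

theorem iterate_Imap_mem_Icc {y : ℝ} (hy : y ∈ Icc (0 : ℝ) (1 / 2)) (i : ℕ) :
    Imap^[i] y ∈ Icc (0 : ℝ) (1 / 2) := by
  cases i with
  | zero => exact hy
  | succ i => rw [Function.iterate_succ_apply']; exact Imap_mem_Icc _

theorem Tmap_nonneg {y : ℝ} (hy : 0 ≤ y) : 0 ≤ Tmap y := by
  unfold Tmap
  split_ifs
  · rfl
  have := Int.fract_nonneg (1 / y)
  positivity

theorem Tmap_mul_one_sub_Imap (y : ℝ) : Tmap y * (1 - Imap y) = y := by
  unfold Tmap Imap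
  split_ifs with hy
  · simp [hy]
  field_simp
  ring

theorem Tmap_le_one_sub {y : ℝ} (hy : y ≤ 1 / 2) : Tmap y ≤ 1 - y := by
  unfold Tmap
  split_ifs with hy0
  · linarith
  have h0 := Int.fract_nonneg (1 / y)
  have h1 := Int.fract_lt_one (1 / y)
  rcases lt_or_gt_of_ne hy0 with hneg | hpos
  · nlinarith
  have h2 : (2 : ℝ) ≤ 1 / y := by rw [le_div_iff₀ hpos]; linarith
  have hfloor : (2 : ℝ) ≤ ⌊1 / y⌋ := by exact_mod_cast Int.le_floor.2 (by exact_mod_cast h2)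
  have hfract : Int.fract (1 / y) ≤ 1 / y - 2 := by rw [← Int.self_sub_floor]; linarith
  calc y * (1 + Int.fract (1 / y)) ≤ y * (1 / y - 1) := by gcongr; linarith
    _ = 1 - y := by field_simp

theorem Tmap_mul_Tmap_Imap_le {y : ℝ} (hy : 0 ≤ y) : Tmap y * Tmap (Imap y) ≤ y :=
  calc Tmap y * Tmap (Imap y) ≤ Tmap y * (1 - Imap y) :=
        mul_le_mul_of_nonneg_left (Tmap_le_one_sub (Imap_mem_Icc y).2) (Tmap_nonneg hy)
    _ = y := Tmap_mul_one_sub_Imap y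

theorem prod_range_two_mul_Tmap_iterate_le {y : ℝ} (hy : y ∈ Icc (0 : ℝ) (1 / 2)) (k : ℕ) :
    ∏ i ∈ Finset.range (2 * k), Tmap (Imap^[i] y) ≤ (1 / 2) ^ k := by
  induction k with
  | zero => simp
  | succ k ih =>
    have hmem := iterate_Imap_mem_Icc hy (2 * k)
    have hpair : Tmap (Imap^[2 * k] y) * Tmap (Imap^[2 * k + 1] y) ≤ 1 / 2 := by
      rw [Function.iterate_succ_apply']
      exact (Tmap_mul_Tmap_Imap_le hmem.1).trans hmem.2
    rw [show 2 * (k + 1) = 2 * k + 1 + 1 by ring, Finset.prod_range_succ, Finset.prod_range_succ,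
      mul_assoc, pow_succ]
    exact mul_le_mul ih hpair (mul_nonneg (Tmap_nonneg hmem.1)
      (Tmap_nonneg (iterate_Imap_mem_Icc hy _).1)) (by positivity)

theorem prod_range_Tmap_iterate_le {y : ℝ} (hy : y ∈ Icc (0 : ℝ) (1 / 2)) (n : ℕ) :
    ∏ i ∈ Finset.range n, Tmap (Imap^[i] y) ≤ (1 / 2) ^ (n / 2) := by
  obtain ⟨k, rfl | rfl⟩ := Nat.even_or_odd' n
  · simpa using prod_range_two_mul_Tmap_iterate_le hy k
  have hmem := iterate_Imap_mem_Icc hy (2 * k)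
  have hlast : Tmap (Imap^[2 * k] y) ≤ 1 := (Tmap_le_one_sub hmem.2).trans (by linarith [hmem.1])
  rw [Finset.prod_range_succ, show (2 * k + 1) / 2 = k by omega]
  exact mul_le_of_le_one_right
    (Finset.prod_nonneg fun i _ => Tmap_nonneg (iterate_Imap_mem_Icc hy i).1) hlast
    |>.trans (prod_range_two_mul_Tmap_iterate_le hy k)

noncomputable def psiTerm (j : ℕ) (y : ℝ) : ℝ :=
  (∏ i ∈ Finset.range (j + 1), Tmap (Imap^[i] y)) * Imap^[j + 1] y

theorem norm_psiTerm_le {y : ℝ} (hy : y ∈ Icc (0 : ℝ) (1 / 2)) (j : ℕ) :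
    ‖psiTerm j y‖ ≤ (1 / 2) ^ ((j + 1) / 2) := by
  have hprod : 0 ≤ ∏ i ∈ Finset.range (j + 1), Tmap (Imap^[i] y) :=
    Finset.prod_nonneg fun i _ => Tmap_nonneg (iterate_Imap_mem_Icc hy i).1
  have hlast := iterate_Imap_mem_Icc hy (j + 1)
  rw [psiTerm, Real.norm_of_nonneg (mul_nonneg hprod hlast.1)]
  exact mul_le_of_le_one_right hprod (by linarith [hlast.2])
    |>.trans (prod_range_Tmap_iterate_le hy (j + 1))

theorem summable_psiTerm_bound : Summable fun j : ℕ => (1 / 2 : ℝ) ^ ((j + 1) / 2) :=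
  (summable_nat_add_iff 1).2 (summable_pow_div_two (by norm_num) (by norm_num))

theorem ne_zero_of_forall_inv_ne_intCast {y : ℝ} (hy : ∀ n : ℤ, y⁻¹ ≠ n) : y ≠ 0 := by
  rintro rfl
  exact hy 0 (by simp)

theorem continuousAt_fract_one_div {y : ℝ} (hy : ∀ n : ℤ, y⁻¹ ≠ n) :
    ContinuousAt (fun x => Int.fract (1 / x)) y :=
  (continuousAt_fract (by rw [one_div]; exact hy _)).comp
    (continuousAt_const.div continuousAt_id (ne_zero_of_forall_inv_ne_intCast hy))

theorem Tmap_continuousAt {y : ℝ} (hy : ∀ n : ℤ, y⁻¹ ≠ n) : ContinuousAt Tmap y := by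
  have hformula : ContinuousAt (fun x => x * (1 + Int.fract (1 / x))) y :=
    continuousAt_id.mul (continuousAt_const.add (continuousAt_fract_one_div hy))
  refine hformula.congr ?_
  filter_upwards [eventually_ne_nhds (ne_zero_of_forall_inv_ne_intCast hy)] with x hx
  simp [Tmap, hx]

theorem Imap_continuousAt {y : ℝ} (hy : ∀ n : ℤ, y⁻¹ ≠ n) : ContinuousAt Imap y := by
  have hfract := continuousAt_fract_one_div hy
  have hden : 1 + Int.fract (1 / y) ≠ 0 := by linarith [Int.fract_nonneg (1 / y)]
  refine (hfract.div (continuousAt_const.add hfract) hden).congr ?_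
  filter_upwards [eventually_ne_nhds (ne_zero_of_forall_inv_ne_intCast hy)] with x hx
  simp [Imap, hx]

theorem irrational_Imap {y : ℝ} (hy : Irrational y) : Irrational (Imap y) := by
  have hfract : Irrational (Int.fract (1 / y)) := by
    rw [one_div, ← Int.self_sub_floor]; exact hy.inv.sub_intCast _
  have hpos : 0 < 1 + Int.fract (1 / y) := by linarith [Int.fract_nonneg (1 / y)]
  have hI : Imap y = 1 - (1 + Int.fract (1 / y))⁻¹ := by
    rw [Imap, if_neg hy.ne_zero]; field_simp; ring
  rw [hI]
  simpa using (hfract.natCast_add 1).inv.intCast_sub 1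

theorem irrational_iterate_Imap {y : ℝ} (hy : Irrational y) (i : ℕ) :
    Irrational (Imap^[i] y) := by
  induction i with
  | zero => exact hy
  | succ i ih => rw [Function.iterate_succ_apply']; exact irrational_Imap ih

theorem continuousAt_iterate_Imap {x : ℝ} (hx : Irrational x) (i : ℕ) :
    ContinuousAt Imap^[i] x := by
  induction i with
  | zero => exact continuousAt_id
  | succ i ih =>
    rw [Function.iterate_succ']
    exact (Imap_continuousAt (irrational_iterate_Imap hx i).inv.ne_int).comp ih

theorem continuousAt_psiTerm {x : ℝ} (hx : Irrational x) (j : ℕ) :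
    ContinuousAt (psiTerm j) x := by
  have hT (i : ℕ) : ContinuousAt (fun y => Tmap (Imap^[i] y)) x :=
    (Tmap_continuousAt (irrational_iterate_Imap hx i).inv.ne_int).comp
      (continuousAt_iterate_Imap hx i)
  exact (tendsto_finsetProd _ fun i _ => hT i).mul (continuousAt_iterate_Imap hx (j + 1))

theorem stmt_10 :
    ∀ x ∈ Set.Icc (0 : ℝ) (1 / 2), Irrational x →
      ContinuousWithinAt Psi (Set.Icc (0 : ℝ) (1 / 2)) x := by
  intro x hx hirr
  have hseries : ContinuousWithinAt (fun y => ∑' j, psiTerm j y) (Icc 0 (1 / 2)) x :=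
    continuousWithinAt_tsum hx (fun j => (continuousAt_psiTerm hirr j).continuousWithinAt)
      summable_psiTerm_bound fun j y hy => norm_psiTerm_le hy j
  exact (continuousWithinAt_id.const_mul 2).add (hseries.const_mul 2)
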